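/- arXiv:0811.4739 — 3 statements merged into one kernel-verified Lean document; each statement's English description precedes it below -/
import Mathlib

section
/- For every real number s > 1, the prime zeta function satisfies the Möbius-inverted formula P(s) = Σ_{k=1}^∞ (μ(k)/k)·log ζ(k·s), where μ is the Möbius function, and the series converges. -/
/-- The Riemann zeta function for real arguments `s > 1`. -/
noncomputable def zetaR (s : ℝ) : ℝ := ∑' n : ℕ, 1 / ((n : ℝ) + 1) ^ s

/-- The prime zeta function `P(s) = ∑_{p prime} p^{-s}` for real `s > 1`. -/
noncomputable def primeZeta (s : ℝ) : ℝ := ∑' p : Nat.Primes, 1 / ((p : ℕ) : ℝ) ^ s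

/-!
Expanding `-log (1 - x) = ∑_{m ≥ 1} x ^ m / m` and regrouping the absolutely convergent double
series by `n = k m` gives, for `|x| < 1`,
`∑_{k ≥ 1} μ(k)/k · (-log (1 - x ^ k)) = ∑_{n ≥ 1} (x ^ n / n) ∑_{d ∣ n} μ(d) = x`.
Take `x = p^{-s}` and sum over the primes `p`: by the Euler product,
`log ζ(t) = ∑_p -log (1 - p^{-t})`, and the bound
`|μ(k)/k · (-log (1 - p^{-ks}))| ≤ 2^{2-k} p^{-s}` allows the sums over `p` and `k` to be
exchanged.
-/

open ArithmeticFunction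
open scoped ArithmeticFunction.Moebius

theorem sum_divisors_moebius (n : ℕ) :
    ∑ d ∈ n.divisors, (μ d : ℝ) = if n = 1 then 1 else 0 := by
  rw [← Int.cast_sum, ← coe_mul_zeta_apply, moebius_mul_coe_zeta, one_apply]
  split_ifs <;> simp

theorem hasSum_moebius_mul_apply_mul {g : ℕ → ℝ}
    (hg : Summable fun c : ℕ+ × ℕ+ => g (c.1 * c.2)) :
    HasSum (fun c : ℕ+ × ℕ+ => (μ c.1 : ℝ) * g (c.1 * c.2)) (g 1) := by
  set f := fun c : ℕ+ × ℕ+ => (μ c.1 : ℝ) * g (c.1 * c.2)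
  have hsum : Summable f := by
    refine hg.abs.of_norm_bounded fun c => ?_
    rw [norm_mul, Real.norm_eq_abs, Real.norm_eq_abs]
    exact mul_le_of_le_one_left (abs_nonneg _) (mod_cast abs_moebius_le_one)
  have hfiber (n : ℕ+) : HasSum (fun c : (n : ℕ).divisorsAntidiagonal =>
      (μ c.1.1 : ℝ) * g (c.1.1 * c.1.2)) (if n = 1 then g 1 else 0) := by
    have hmul : ∀ c ∈ (n : ℕ).divisorsAntidiagonal,
        (μ c.1 : ℝ) * g (c.1 * c.2) = μ c.1 * g n := fun c hc => by
      rw [(Nat.mem_divisorsAntidiagonal.1 hc).1]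
    convert hasSum_fintype _
    rw [Finset.univ_eq_attach,
      Finset.sum_attach _ (fun c : ℕ × ℕ => (μ c.1 : ℝ) * g (c.1 * c.2)),
      Finset.sum_congr rfl hmul, ← Finset.sum_mul, Nat.sum_divisorsAntidiagonal (fun a _ => (μ a : ℝ)), sum_divisors_moebius]
    by_cases h : n = 1
    · simp [h]
    · simp [h, PNat.coe_eq_one_iff]
  have hsigma := (sigmaAntidiagonalEquivProd.summable_iff.mpr hsum).hasSum
  rw [(hsigma.sigma hfiber).unique (hasSum_ite_eq 1 (g 1))] at hsigma
  exact sigmaAntidiagonalEquivProd.hasSum_iff.mp hsigma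

theorem hasSum_pow_div_log_of_abs_lt_one_pnat {x : ℝ} (hx : |x| < 1) :
    HasSum (fun n : ℕ+ => x ^ (n : ℕ) / n) (-Real.log (1 - x)) := by
  rw [← Equiv.pnatEquivNat.symm.hasSum_iff]
  exact (Real.hasSum_pow_div_log_of_abs_lt_one hx).congr_fun fun n => by simp

theorem hasSum_moebius_div_mul_neg_log_one_sub_pow_pnat {x : ℝ} (hx : |x| < 1) :
    HasSum (fun k : ℕ+ => (μ k : ℝ) / k * -Real.log (1 - x ^ (k : ℕ))) x := by
  have hg : Summable fun c : ℕ+ × ℕ+ => x ^ (c.1 * c.2 : ℕ) / (c.1 * c.2 : ℕ) := by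
    refine (summable_prod_mul_pow 0 (r := |x|) (by rwa [Real.norm_eq_abs, abs_abs])).of_norm_bounded
      fun c => ?_
    rw [pow_zero, one_mul, norm_div, norm_pow, Real.norm_eq_abs]
    exact div_le_self (by positivity) (by exact_mod_cast (c.1 * c.2).pos)
  have hrow (k : ℕ+) : HasSum (fun b : ℕ+ => (μ k : ℝ) * (x ^ (k * b : ℕ) / (k * b : ℕ)))
      ((μ k : ℝ) / k * -Real.log (1 - x ^ (k : ℕ))) := by
    refine ((hasSum_pow_div_log_of_abs_lt_one_pnat ?_).mul_left ((μ k : ℝ) / k)).congr_fun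
      fun b => ?_
    · rw [abs_pow]
      exact pow_lt_one₀ (abs_nonneg x) hx k.ne_zero
    · rw [pow_mul]; push_cast; ring
  have h := (hasSum_moebius_mul_apply_mul (g := fun n => x ^ n / n) hg).prod_fiberwise hrow
  simpa only [pow_one, Nat.cast_one, div_one] using h

theorem hasSum_moebius_div_mul_neg_log_one_sub_pow {x : ℝ} (hx : |x| < 1) :
    HasSum (fun k : ℕ => (μ (k + 1) : ℝ) / ((k : ℝ) + 1) * -Real.log (1 - x ^ (k + 1)))
      x := by
  refine (Equiv.pnatEquivNat.symm.hasSum_iff.mpr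
    (hasSum_moebius_div_mul_neg_log_one_sub_pow_pnat hx)).congr_fun fun k => ?_
  simp

theorem Nat.Primes.rpow_neg_le_one_half (p : Nat.Primes) {t : ℝ} (ht : 1 ≤ t) :
    ((p : ℕ) : ℝ) ^ (-t) ≤ 1 / 2 := by
  refine (Real.rpow_le_rpow_of_nonpos zero_lt_two (mod_cast p.prop.two_le) (by linarith)).trans ?_
  rw [one_div, ← Real.rpow_neg_one]
  exact Real.rpow_le_rpow_of_exponent_le one_le_two (by linarith)

noncomputable def natRpowNegHom {t : ℝ} (ht : t ≠ 0) : ℕ →*₀ ℝ where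
  toFun n := (n : ℝ) ^ (-t)
  map_zero' := by simp [ht]
  map_one' := by simp
  map_mul' m n := by
    push_cast
    exact Real.mul_rpow m.cast_nonneg n.cast_nonneg

theorem zetaR_eq_tsum_rpow_neg {t : ℝ} (ht : 1 < t) :
    zetaR t = ∑' n : ℕ, (n : ℝ) ^ (-t) := by
  rw [(Real.summable_nat_rpow.mpr (by linarith)).tsum_eq_zero_add, zetaR, Nat.cast_zero,
    Real.zero_rpow (by linarith), zero_add]
  refine tsum_congr fun n => ?_
  rw [Nat.cast_succ, Real.rpow_neg (by positivity), one_div]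

theorem hasProd_zetaR {t : ℝ} (ht : 1 < t) :
    HasProd (fun p : Nat.Primes => (1 - ((p : ℕ) : ℝ) ^ (-t))⁻¹) (zetaR t) := by
  have hsum : Summable fun n => ‖natRpowNegHom (by linarith : t ≠ 0) n‖ := by
    refine (Real.summable_nat_rpow.mpr (by linarith : -t < -1)).congr fun n => ?_
    exact (Real.norm_of_nonneg (by positivity)).symm
  rw [zetaR_eq_tsum_rpow_neg ht]
  exact EulerProduct.eulerProduct_completely_multiplicative_hasProd hsum

theorem hasSum_neg_log_one_sub_prime_rpow {t : ℝ} (ht : 1 < t) :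
    HasSum (fun p : Nat.Primes => -Real.log (1 - ((p : ℕ) : ℝ) ^ (-t)))
      (Real.log (zetaR t)) := by
  have hlog : Summable fun p : Nat.Primes => Real.log ((1 - ((p : ℕ) : ℝ) ^ (-t))⁻¹) := by
    simpa [Real.log_inv, sub_eq_add_neg] using (Real.summable_log_one_add_of_summable
      (Nat.Primes.summable_rpow.mpr (by linarith : -t < -1)).neg).neg
  have hpos (p : Nat.Primes) : 0 < (1 - ((p : ℕ) : ℝ) ^ (-t))⁻¹ := by
    have := p.rpow_neg_le_one_half ht.le
    exact inv_pos.mpr (by linarith)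
  rw [← (Real.hasProd_of_hasSum_log hpos hlog.hasSum).unique (hasProd_zetaR ht), Real.log_exp]
  simpa only [Real.log_inv] using hlog.hasSum

theorem neg_log_one_sub_le_two_mul {u : ℝ} (h0 : 0 ≤ u) (h1 : u ≤ 1 / 2) :
    -Real.log (1 - u) ≤ 2 * u := by
  have hlog := Real.one_sub_inv_le_log_of_pos (x := 1 - u) (by linarith)
  have hinv : (1 - u)⁻¹ * (1 - u) = 1 := inv_mul_cancel₀ (by linarith)
  nlinarith

theorem abs_moebius_div_mul_neg_log_one_sub_pow_le {y : ℝ} (h0 : 0 ≤ y) (h1 : y ≤ 1 / 2)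
    (k : ℕ) :
    |(μ (k + 1) : ℝ) / ((k : ℝ) + 1) * -Real.log (1 - y ^ (k + 1))| ≤
      2 * (y * (1 / 2) ^ k) := by
  have hpow : y ^ (k + 1) ≤ y * (1 / 2) ^ k := by
    rw [pow_succ']
    exact mul_le_mul_of_nonneg_left (pow_le_pow_left₀ h0 h1 k) h0
  have hpow1 : y ^ (k + 1) ≤ 1 / 2 :=
    (hpow.trans (mul_le_of_le_one_right h0 (pow_le_one₀ (by norm_num) (by norm_num)))).trans h1
  have hcoeff : |(μ (k + 1) : ℝ) / ((k : ℝ) + 1)| ≤ 1 := by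
    rw [abs_div, abs_of_nonneg (by positivity : (0 : ℝ) ≤ k + 1), div_le_one (by positivity)]
    exact (mod_cast abs_moebius_le_one : |(μ (k + 1) : ℝ)| ≤ 1).trans
      (le_add_of_nonneg_left k.cast_nonneg)
  have hlog0 : 0 ≤ -Real.log (1 - y ^ (k + 1)) :=
    neg_nonneg.mpr (Real.log_nonpos (by linarith) (by linarith [pow_nonneg h0 (k + 1)]))
  rw [abs_mul, abs_of_nonneg hlog0]
  calc _ ≤ 1 * -Real.log (1 - y ^ (k + 1)) := mul_le_mul_of_nonneg_right hcoeff hlog0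
    _ ≤ 2 * y ^ (k + 1) := by rw [one_mul]; exact neg_log_one_sub_le_two_mul (by positivity) hpow1
    _ ≤ 2 * (y * (1 / 2) ^ k) := by linarith

/-- Möbius inversion: for every real `s > 1`,
`P(s) = ∑_{k ≥ 1} (μ(k)/k) log ζ(k s)`, the series converging. -/
theorem primeZeta_eq_moebius_sum (s : ℝ) (hs : 1 < s) :
    Summable (fun k : ℕ =>
      ((ArithmeticFunction.moebius (k + 1) : ℤ) : ℝ) / ((k : ℝ) + 1) *
        Real.log (zetaR (((k : ℝ) + 1) * s))) ∧
    primeZeta s =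
      ∑' k : ℕ, ((ArithmeticFunction.moebius (k + 1) : ℤ) : ℝ) / ((k : ℝ) + 1) *
        Real.log (zetaR (((k : ℝ) + 1) * s)) := by
  set F : Nat.Primes × ℕ → ℝ := fun pk => (μ (pk.2 + 1) : ℝ) / ((pk.2 : ℝ) + 1) *
    -Real.log (1 - (((pk.1 : ℕ) : ℝ) ^ (-s)) ^ (pk.2 + 1))
  have hF : Summable F := by
    have hbound := (Nat.Primes.summable_rpow.mpr (by linarith : -s < -1)).mul_of_nonneg
      summable_geometric_two (fun p => by positivity) (fun k => by positivity)
    exact (hbound.mul_left 2).of_norm_bounded fun pk =>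
      abs_moebius_div_mul_neg_log_one_sub_pow_le (by positivity)
        (pk.1.rpow_neg_le_one_half hs.le) pk.2
  have hrow (p : Nat.Primes) : HasSum (fun k => F (p, k)) (1 / ((p : ℕ) : ℝ) ^ s) := by
    rw [one_div, ← Real.rpow_neg (Nat.cast_nonneg _)]
    refine hasSum_moebius_div_mul_neg_log_one_sub_pow (x := ((p : ℕ) : ℝ) ^ (-s)) ?_
    rw [abs_of_nonneg (by positivity)]
    linarith [p.rpow_neg_le_one_half hs.le]
  have hcol (k : ℕ) : HasSum (fun p => F (p, k))
      ((μ (k + 1) : ℝ) / ((k : ℝ) + 1) * Real.log (zetaR (((k : ℝ) + 1) * s))) := by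
    have hk : 1 < ((k : ℝ) + 1) * s := by nlinarith [k.cast_nonneg (α := ℝ)]
    refine ((hasSum_neg_log_one_sub_prime_rpow hk).mul_left _).congr_fun fun p => ?_
    simp only [F]
    rw [← Real.rpow_mul_natCast (Nat.cast_nonneg _)]
    push_cast
    ring_nf
  have hP := hF.hasSum.prod_fiberwise hrow
  have hK := ((Equiv.prodComm ℕ Nat.Primes).hasSum_iff.mpr hF.hasSum).prod_fiberwise hcol
  exact ⟨hK.summable, by rw [primeZeta, hP.tsum_eq, hK.tsum_eq]⟩
end

section
/- As m → ∞ along the reals, the integral I(m) = ∫_m^∞ log ζ(t) dt satisfies lim_{m→∞} 2^m · log 2 · I(m) = 1; equivalently, I(m) is asymptotic to 1/(2^m · log 2). -/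
/-!
Write `ζ(t) - 1 = 2^{-t} + ∑_{n ≥ 3} n^{-t}`. Comparing exponents termwise, the tail is at most
`3^{2-t} ∑_{n ≥ 3} n^{-2} = O(3^{-t})`, and since `|log (1 + x) - x| ≤ x²` for `x ≥ 0`, this gives
`log ζ(t) = 2^{-t} + O(3^{-t})`. Integrating from `m` to `∞`, the main term contributes exactly
`2^{-m} / log 2` and the error term `O(3^{-m}) = o(2^{-m})`.
-/

open Filter MeasureTheory

open Set Real Topology

section InvRpow

variable {b : ℝ}

lemma inv_rpow_eq_exp (hb : 0 < b) (t : ℝ) : (b ^ t)⁻¹ = exp (-log b * t) := by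
  rw [rpow_def_of_pos hb, ← exp_neg, neg_mul]

lemma integrableOn_inv_rpow_Ici (hb : 1 < b) (m : ℝ) :
    IntegrableOn (fun t => (b ^ t)⁻¹) (Ici m) := by
  rw [integrableOn_Ici_iff_integrableOn_Ioi]
  simp_rw [inv_rpow_eq_exp (zero_lt_one.trans hb)]
  exact integrableOn_exp_mul_Ioi (neg_lt_zero.2 (log_pos hb)) m

lemma integral_inv_rpow_Ici (hb : 1 < b) (m : ℝ) :
    ∫ t in Ici m, (b ^ t)⁻¹ = (b ^ m)⁻¹ / log b := by
  simp_rw [integral_Ici_eq_integral_Ioi, inv_rpow_eq_exp (zero_lt_one.trans hb),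
    integral_exp_mul_Ioi (neg_lt_zero.2 (log_pos hb)), neg_div_neg_eq]

end InvRpow

lemma tendsto_rpow_mul_integral_of_abs_sub_le {f : ℝ → ℝ} {a b C t₀ : ℝ} (ha : 1 < a)
    (hab : a < b) (hf : IntegrableOn f (Ici t₀))
    (hbound : ∀ t ≥ t₀, |f t - (a ^ t)⁻¹| ≤ C * (b ^ t)⁻¹) :
    Tendsto (fun m => a ^ m * log a * ∫ t in Ici m, f t) atTop (𝓝 1) := by
  have hb : 1 < b := ha.trans hab
  have ha₀ : 0 < a := zero_lt_one.trans ha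
  have hlog : 0 < log a := log_pos ha
  have herr : Tendsto (fun m => a ^ m * log a * ∫ t in Ici m, (f t - (a ^ t)⁻¹)) atTop (𝓝 0) := by
    have hratio : Tendsto (fun m : ℝ => C * log a / log b * (a / b) ^ m) atTop (𝓝 0) := by
      have hbase : Tendsto (fun m : ℝ => (a / b) ^ m) atTop (𝓝 0) :=
        tendsto_rpow_atTop_of_base_lt_one _ (neg_one_lt_zero.trans (div_pos ha₀ (by linarith)))
          ((div_lt_one (by linarith)).2 hab)
      simpa using hbase.const_mul (C * log a / log b)
    refine squeeze_zero_norm' ?_ hratio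
    filter_upwards [eventually_ge_atTop t₀] with m hm
    have hint : ‖∫ t in Ici m, (f t - (a ^ t)⁻¹)‖ ≤ ∫ t in Ici m, C * (b ^ t)⁻¹ :=
      norm_integral_le_of_norm_le ((integrableOn_inv_rpow_Ici hb m).const_mul C) <| by
        filter_upwards [ae_restrict_mem measurableSet_Ici] with t ht
        exact hbound t (hm.trans ht)
    calc ‖a ^ m * log a * ∫ t in Ici m, (f t - (a ^ t)⁻¹)‖
        = a ^ m * log a * ‖∫ t in Ici m, (f t - (a ^ t)⁻¹)‖ := by
          rw [norm_mul, Real.norm_of_nonneg (by positivity)]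
      _ ≤ a ^ m * log a * ∫ t in Ici m, C * (b ^ t)⁻¹ := by gcongr
      _ = C * log a / log b * (a / b) ^ m := by
          rw [integral_const_mul, integral_inv_rpow_Ici hb, div_rpow ha₀.le (by linarith)]
          field_simp
  refine (herr.const_add 1).congr' ?_ |>.trans (by simp)
  filter_upwards [eventually_ge_atTop t₀] with m hm
  rw [integral_sub (hf.mono_set (Ici_subset_Ici.2 hm)) (integrableOn_inv_rpow_Ici ha m),
    integral_inv_rpow_Ici ha]
  field_simp
  ring

section ShiftedPSeries

variable {c s t : ℝ}

lemma summable_one_div_nat_add_rpow_of_pos (hc : 0 < c) (hs : 1 < s) :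
    Summable fun n : ℕ => 1 / ((n : ℝ) + c) ^ s :=
  ((summable_one_div_nat_add_rpow c s).2 hs).congr fun n => by
    rw [abs_of_pos (by positivity)]

lemma tsum_one_div_nat_add_rpow_eq (hc : 0 < c) (ht : 1 < t) :
    ∑' n : ℕ, 1 / ((n : ℝ) + c) ^ t = (c ^ t)⁻¹ + ∑' n : ℕ, 1 / ((n : ℝ) + (c + 1)) ^ t := by
  rw [(summable_one_div_nat_add_rpow_of_pos hc ht).tsum_eq_zero_add]
  push_cast
  simp_rw [zero_add, one_div, add_assoc, add_comm 1 c]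

lemma tsum_one_div_nat_add_rpow_nonneg (hc : 0 ≤ c) : 0 ≤ ∑' n : ℕ, 1 / ((n : ℝ) + c) ^ t :=
  tsum_nonneg fun n => by positivity

lemma tsum_one_div_nat_add_rpow_le (hc : 0 < c) (hs : 1 < s) (hst : s ≤ t) :
    ∑' n : ℕ, 1 / ((n : ℝ) + c) ^ t ≤ c ^ s / c ^ t * ∑' n : ℕ, 1 / ((n : ℝ) + c) ^ s := by
  rw [← tsum_mul_left]
  refine (summable_one_div_nat_add_rpow_of_pos hc (hs.trans_le hst)).tsum_le_tsum (fun n => ?_)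
    ((summable_one_div_nat_add_rpow_of_pos hc hs).mul_left _)
  have hn : 0 < (n : ℝ) + c := by positivity
  have key : c ^ (t - s) ≤ ((n : ℝ) + c) ^ (t - s) :=
    rpow_le_rpow hc.le (by linarith [n.cast_nonneg (α := ℝ)]) (by linarith)
  rw [rpow_sub hc, rpow_sub hn, div_le_div_iff₀ (by positivity) (by positivity)] at key
  rw [div_mul_div_comm, mul_one, div_le_div_iff₀ (by positivity) (by positivity)]
  linarith

end ShiftedPSeries

lemma abs_log_one_add_sub_le {x : ℝ} (hx : 0 ≤ x) : |log (1 + x) - x| ≤ x ^ 2 := by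
  have hpos : 0 < 1 + x := by linarith
  have hupper := log_le_sub_one_of_pos hpos
  have hlower := one_sub_inv_le_log_of_pos hpos
  have hgap : 1 - (1 + x)⁻¹ - (x - x ^ 2) = x ^ 3 / (1 + x) := by
    field_simp
    ring
  have : 0 ≤ x ^ 3 / (1 + x) := by positivity
  rw [abs_le]
  constructor <;> nlinarith

section ZetaR

variable {m t : ℝ}

lemma zetaR_sub_one_eq (ht : 1 < t) : zetaR t - 1 = ∑' n : ℕ, 1 / ((n : ℝ) + 2) ^ t := by
  rw [zetaR, tsum_one_div_nat_add_rpow_eq one_pos ht]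
  norm_num

lemma one_le_zetaR (ht : 1 < t) : 1 ≤ zetaR t := by
  linarith [zetaR_sub_one_eq ht, tsum_one_div_nat_add_rpow_nonneg (t := t) zero_le_two]

lemma zetaR_antitoneOn : AntitoneOn zetaR (Ioi 1) := fun s hs _ _ hst => by
  simpa [zetaR] using tsum_one_div_nat_add_rpow_le one_pos hs hst

lemma zetaR_sub_one_le (hm : 1 < m) (hmt : m ≤ t) :
    zetaR t - 1 ≤ 2 ^ m * (zetaR m - 1) * (2 ^ t)⁻¹ := by
  rw [zetaR_sub_one_eq hm, zetaR_sub_one_eq (hm.trans_le hmt), mul_right_comm, ← div_eq_mul_inv]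
  exact tsum_one_div_nat_add_rpow_le two_pos hm hmt

lemma integrableOn_log_zetaR (hm : 1 < m) :
    IntegrableOn (fun t => log (zetaR t)) (Ici m) := by
  have hanti : AntitoneOn (fun t => log (zetaR t)) (Ici m) := fun s hs u hu hsu =>
    log_le_log (zero_lt_one.trans_le (one_le_zetaR (hm.trans_le hu)))
      (zetaR_antitoneOn (hm.trans_le hs) (hm.trans_le hu) hsu)
  refine Integrable.mono'
    ((integrableOn_inv_rpow_Ici one_lt_two m).const_mul (2 ^ m * (zetaR m - 1)))
    (aemeasurable_restrict_of_antitoneOn measurableSet_Ici hanti).aestronglyMeasurable ?_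
  filter_upwards [ae_restrict_mem measurableSet_Ici] with t ht
  have hζ := one_le_zetaR (hm.trans_le ht)
  rw [norm_of_nonneg (log_nonneg hζ)]
  exact (log_le_sub_one_of_pos (by linarith)).trans (zetaR_sub_one_le hm ht)

lemma exists_abs_zetaR_sub_one_sub_le :
    ∃ K, 0 ≤ K ∧ ∀ t ≥ 2, |zetaR t - 1 - (2 ^ t)⁻¹| ≤ K * (3 ^ t)⁻¹ := by
  refine ⟨3 ^ (2 : ℝ) * ∑' n : ℕ, 1 / ((n : ℝ) + 3) ^ (2 : ℝ),
    by positivity [tsum_one_div_nat_add_rpow_nonneg (t := 2) zero_le_three], fun t ht => ?_⟩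
  have ht₁ : 1 < t := by linarith
  have hrest : zetaR t - 1 - (2 ^ t)⁻¹ = ∑' n : ℕ, 1 / ((n : ℝ) + 3) ^ t := by
    rw [zetaR_sub_one_eq ht₁, tsum_one_div_nat_add_rpow_eq two_pos ht₁]
    norm_num
  rw [hrest, abs_of_nonneg (tsum_one_div_nat_add_rpow_nonneg zero_le_three), mul_right_comm,
    ← div_eq_mul_inv]
  exact tsum_one_div_nat_add_rpow_le three_pos one_lt_two ht

lemma exists_abs_log_zetaR_sub_le :
    ∃ C, ∀ t ≥ 2, |log (zetaR t) - (2 ^ t)⁻¹| ≤ C * (3 ^ t)⁻¹ := by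
  obtain ⟨K, hK, hζ⟩ := exists_abs_zetaR_sub_one_sub_le
  refine ⟨(1 + K) ^ 2 + K, fun t ht => ?_⟩
  set x := zetaR t - 1 with hx
  have hx₀ : 0 ≤ x := sub_nonneg.2 (one_le_zetaR (by linarith))
  have h32 : (3 ^ t)⁻¹ ≤ (2 ^ t : ℝ)⁻¹ := by
    gcongr
    norm_num
  have hsq : ((2 ^ t : ℝ)⁻¹) ^ 2 ≤ (3 ^ t)⁻¹ := by
    rw [inv_pow, ← rpow_natCast, ← rpow_mul zero_le_two, mul_comm, rpow_mul zero_le_two]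
    gcongr
    norm_num
  have hxle : x ≤ (1 + K) * (2 ^ t)⁻¹ := by
    nlinarith [(abs_le.1 (hζ t ht)).2]
  have hxsq : x ^ 2 ≤ (1 + K) ^ 2 * (3 ^ t)⁻¹ := by
    calc x ^ 2 ≤ ((1 + K) * (2 ^ t)⁻¹) ^ 2 := by gcongr
      _ = (1 + K) ^ 2 * ((2 ^ t)⁻¹) ^ 2 := by ring
      _ ≤ (1 + K) ^ 2 * (3 ^ t)⁻¹ := by gcongr
  calc |log (zetaR t) - (2 ^ t)⁻¹| ≤ |log (1 + x) - x| + |x - (2 ^ t)⁻¹| := by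
        rw [hx, add_sub_cancel]
        exact abs_sub_le _ _ _
    _ ≤ (1 + K) ^ 2 * (3 ^ t)⁻¹ + K * (3 ^ t)⁻¹ :=
        add_le_add ((abs_log_one_add_sub_le hx₀).trans hxsq) (hζ t ht)
    _ = ((1 + K) ^ 2 + K) * (3 ^ t)⁻¹ := by ring

end ZetaR

/-- The integral `I(m) = ∫_m^∞ log ζ(t) dt` converges for every `m > 1` and satisfies
`lim_{m→∞} 2^m log 2 · I(m) = 1`; that is, `I(m) ~ 1/(2^m log 2)`. -/
theorem tendsto_two_rpow_mul_integral_log_zeta :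
    (∀ m : ℝ, 1 < m →
      IntegrableOn (fun t : ℝ => Real.log (zetaR t)) (Set.Ici m)) ∧
    Tendsto (fun m : ℝ =>
        (2 : ℝ) ^ m * Real.log 2 * ∫ t in Set.Ici m, Real.log (zetaR t))
      atTop (nhds 1) := by
  refine ⟨fun m hm => integrableOn_log_zetaR hm, ?_⟩
  obtain ⟨C, hC⟩ := exists_abs_log_zetaR_sub_le
  exact tendsto_rpow_mul_integral_of_abs_sub_le one_lt_two (by norm_num)
    (integrableOn_log_zetaR one_lt_two) hC
end

section
/- For every integer s ≥ 2 and every integer a ≥ 1, the recursion Σ_{p prime} 1/((a+p)^s · log p) = Σ_{l=0}^∞ binom(s+l-1, s-1) · (-1)^l · Σ_{p prime} 1/((a-1+p)^{s+l} · log p) holds, with all series converging. -/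
/-!
For `x > 1` the negative binomial series in `1 / x` gives
`(x + 1)⁻ˢ = ∑ₗ C(s+l-1, s-1) (-1)ˡ x^{-(s+l)}`, and the same series with all signs positive
sums to `(x - 1)⁻ˢ`. Taking `x = a - 1 + p` with weight `1 / log p`, the double series over
primes `p` and `l ≥ 0` is therefore absolutely convergent as soon as
`∑ₚ 1 / ((a + p - 2)ˢ log p)` converges, which for `s ≥ 2` follows by comparison with
`∑ₚ 1 / p²`; the two summations may then be interchanged.
-/

theorem hasSum_choose_mul_pow_mul_div_pow {s : ℕ} (hs : 0 < s) {x ε : ℝ} (hε : |ε| < x)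
    (c : ℝ) :
    HasSum (fun l : ℕ => ((s + l - 1).choose (s - 1) : ℝ) * ε ^ l * (c / x ^ (s + l)))
      (c / (x - ε) ^ s) := by
  have hx : 0 < x := (abs_nonneg ε).trans_lt hε
  have hr : ‖ε / x‖ < 1 := by
    rwa [norm_div, Real.norm_eq_abs, Real.norm_of_nonneg hx.le, div_lt_one hx]
  have hxε : x - ε ≠ 0 := (sub_pos.2 ((le_abs_self ε).trans_lt hε)).ne'
  have hsum : 1 / (1 - ε / x) ^ (s - 1 + 1) * (c / x ^ s) = c / (x - ε) ^ s := by
    rw [Nat.sub_add_cancel hs, one_sub_div hx.ne', div_pow]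
    field_simp
  rw [← hsum]
  refine ((hasSum_choose_mul_geometric_of_norm_lt_one (s - 1) hr).mul_right _).congr_fun
    fun l => ?_
  rw [show s + l - 1 = l + (s - 1) by omega, pow_add, div_pow]
  field_simp

section

variable {ι : Type*} {x w : ι → ℝ} {s : ℕ}

theorem summable_div_pow_add (hx : ∀ i, 1 < x i) (hw : ∀ i, 0 ≤ w i)
    (hsum : Summable fun i => w i / (x i - 1) ^ s) (l : ℕ) :
    Summable fun i => w i / x i ^ (s + l) := by
  refine hsum.of_nonneg_of_le (fun i => div_nonneg (hw i) (pow_nonneg (by linarith [hx i]) _))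
    fun i => div_le_div_of_nonneg_left (hw i) (pow_pos (sub_pos.2 (hx i)) s) ?_
  calc (x i - 1) ^ s ≤ x i ^ s := by gcongr <;> linarith [hx i]
    _ ≤ x i ^ (s + l) := pow_le_pow_right₀ (hx i).le (Nat.le_add_right s l)

theorem summable_div_add_one_pow (hx : ∀ i, 1 < x i) (hw : ∀ i, 0 ≤ w i)
    (hsum : Summable fun i => w i / (x i - 1) ^ s) :
    Summable fun i => w i / (x i + 1) ^ s :=
  hsum.of_nonneg_of_le (fun i => div_nonneg (hw i) (pow_nonneg (by linarith [hx i]) _))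
    fun i => div_le_div_of_nonneg_left (hw i) (pow_pos (sub_pos.2 (hx i)) s)
      (by gcongr <;> linarith [hx i])

theorem summable_choose_mul_neg_one_pow_mul_div_pow (hs : 0 < s) (hx : ∀ i, 1 < x i)
    (hw : ∀ i, 0 ≤ w i) (hsum : Summable fun i => w i / (x i - 1) ^ s) :
    Summable fun q : ι × ℕ =>
      ((s + q.2 - 1).choose (s - 1) : ℝ) * (-1) ^ q.2 * (w q.1 / x q.1 ^ (s + q.2)) := by
  have hterm (i : ι) (n : ℕ) : 0 ≤ w i / x i ^ n :=
    div_nonneg (hw i) (pow_nonneg (by linarith [hx i]) _)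
  have hrow (i : ι) : HasSum
      (fun l : ℕ => ((s + l - 1).choose (s - 1) : ℝ) * (w i / x i ^ (s + l)))
      (w i / (x i - 1) ^ s) := by
    simpa using hasSum_choose_mul_pow_mul_div_pow hs (ε := 1) (by simpa using hx i) (w i)
  have habs : Summable fun q : ι × ℕ =>
      ((s + q.2 - 1).choose (s - 1) : ℝ) * (w q.1 / x q.1 ^ (s + q.2)) :=
    (summable_prod_of_nonneg fun q => mul_nonneg (Nat.cast_nonneg _) (hterm _ _)).2
      ⟨fun i => (hrow i).summable, hsum.congr fun i => (hrow i).tsum_eq.symm⟩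
  refine habs.of_norm_bounded fun q => le_of_eq ?_
  rw [norm_mul, norm_mul, norm_pow, norm_neg, norm_one, one_pow, mul_one, Real.norm_natCast,
    Real.norm_of_nonneg (hterm _ _)]

theorem hasSum_choose_mul_neg_one_pow_mul_tsum_div_pow (hs : 0 < s) (hx : ∀ i, 1 < x i)
    (hw : ∀ i, 0 ≤ w i) (hsum : Summable fun i => w i / (x i - 1) ^ s) :
    HasSum (fun l : ℕ => ((s + l - 1).choose (s - 1) : ℝ) * (-1) ^ l * ∑' i, w i / x i ^ (s + l))
      (∑' i, w i / (x i + 1) ^ s) := by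
  have hF := summable_choose_mul_neg_one_pow_mul_div_pow hs hx hw hsum
  have hrow (i : ι) : HasSum
      (fun l : ℕ => ((s + l - 1).choose (s - 1) : ℝ) * (-1) ^ l * (w i / x i ^ (s + l)))
      (w i / (x i + 1) ^ s) := by
    simpa using hasSum_choose_mul_pow_mul_div_pow hs (ε := -1) (by simpa using hx i) (w i)
  have hcol (l : ℕ) : HasSum
      (fun i => ((s + l - 1).choose (s - 1) : ℝ) * (-1) ^ l * (w i / x i ^ (s + l)))
      (((s + l - 1).choose (s - 1) : ℝ) * (-1) ^ l * ∑' i, w i / x i ^ (s + l)) :=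
    (summable_div_pow_add hx hw hsum l).hasSum.mul_left _
  rw [(hF.hasSum.prod_fiberwise hrow).tsum_eq, ← (Equiv.prodComm ℕ ι).tsum_eq]
  exact hF.prod_symm.hasSum.prod_fiberwise hcol

end

theorem summable_primes_inv_log_div_pow {b : ℝ} (hb : 0 ≤ b) {s : ℕ} (hs : 1 < s) :
    Summable fun p : Nat.Primes => (Real.log ((p : ℕ) : ℝ))⁻¹ / (b + ((p : ℕ) : ℝ) - 1) ^ s := by
  have hp : Summable fun p : Nat.Primes => 1 / ((p : ℕ) : ℝ) ^ s :=
    (Real.summable_one_div_nat_pow.2 hs).comp_injective Nat.Primes.coe_nat_injective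
  have h2 (p : Nat.Primes) : (2 : ℝ) ≤ (p : ℕ) := by exact_mod_cast p.2.two_le
  refine (hp.mul_left ((Real.log 2)⁻¹ * 2 ^ s)).of_nonneg_of_le (fun p => ?_) fun p => ?_
  · exact div_nonneg (inv_nonneg.2 (Real.log_nonneg (by linarith [h2 p])))
      (pow_nonneg (by linarith [h2 p]) _)
  · have hlog2 : 0 < Real.log 2 := Real.log_pos one_lt_two
    calc (Real.log ((p : ℕ) : ℝ))⁻¹ / (b + ((p : ℕ) : ℝ) - 1) ^ s
        ≤ (Real.log 2)⁻¹ / (((p : ℕ) : ℝ) / 2) ^ s := by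
          gcongr
          · exact pow_pos (by linarith [h2 p]) _
          · exact h2 p
          · linarith [h2 p]
      _ = (Real.log 2)⁻¹ * 2 ^ s * (1 / ((p : ℕ) : ℝ) ^ s) := by
          rw [div_pow]; field_simp

/-- For every integer `s ≥ 2` and every integer `a ≥ 1`,
`∑_p 1/((a+p)^s log p)
  = ∑_{l ≥ 0} C(s+l-1, s-1) (-1)^l ∑_p 1/((a-1+p)^{s+l} log p)`,
with all series converging. -/
theorem sum_shifted_pow_log_recursion (s a : ℕ) (hs : 2 ≤ s) (ha : 1 ≤ a) :
    Summable (fun p : Nat.Primes =>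
      1 / (((a : ℝ) + ((p : ℕ) : ℝ)) ^ s * Real.log ((p : ℕ) : ℝ))) ∧
    (∀ l : ℕ, Summable (fun p : Nat.Primes =>
      1 / (((a : ℝ) - 1 + ((p : ℕ) : ℝ)) ^ (s + l) * Real.log ((p : ℕ) : ℝ)))) ∧
    Summable (fun l : ℕ => ((s + l - 1).choose (s - 1) : ℝ) * (-1 : ℝ) ^ l *
      ∑' p : Nat.Primes,
        1 / (((a : ℝ) - 1 + ((p : ℕ) : ℝ)) ^ (s + l) * Real.log ((p : ℕ) : ℝ))) ∧
    ∑' p : Nat.Primes, 1 / (((a : ℝ) + ((p : ℕ) : ℝ)) ^ s * Real.log ((p : ℕ) : ℝ)) =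
      ∑' l : ℕ, ((s + l - 1).choose (s - 1) : ℝ) * (-1 : ℝ) ^ l *
        ∑' p : Nat.Primes,
          1 / (((a : ℝ) - 1 + ((p : ℕ) : ℝ)) ^ (s + l) * Real.log ((p : ℕ) : ℝ)) := by
  have hterm (y : ℝ) (n : ℕ) (p : Nat.Primes) :
      1 / (y ^ n * Real.log ((p : ℕ) : ℝ)) = (Real.log ((p : ℕ) : ℝ))⁻¹ / y ^ n := by
    rw [one_div, mul_inv, div_eq_mul_inv, mul_comm]
  have hshift (p : Nat.Primes) : (a : ℝ) + ((p : ℕ) : ℝ) = (a - 1 + ((p : ℕ) : ℝ)) + 1 := by ring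
  simp only [hterm, hshift]
  have ha' : (0 : ℝ) ≤ a - 1 := sub_nonneg.2 (by exact_mod_cast ha)
  have hx (p : Nat.Primes) : 1 < (a : ℝ) - 1 + ((p : ℕ) : ℝ) := by
    have : (2 : ℝ) ≤ (p : ℕ) := by exact_mod_cast p.2.two_le
    linarith
  have hw (p : Nat.Primes) : 0 ≤ (Real.log ((p : ℕ) : ℝ))⁻¹ :=
    inv_nonneg.2 (Real.log_nonneg (by exact_mod_cast p.2.one_lt.le))
  have hsum := summable_primes_inv_log_div_pow ha' hs
  have h := hasSum_choose_mul_neg_one_pow_mul_tsum_div_pow (by omega) hx hw hsum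
  exact ⟨summable_div_add_one_pow hx hw hsum, summable_div_pow_add hx hw hsum, h.summable,
    h.tsum_eq.symm⟩
end
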